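/- Let G be a finite π-separable group in which every irreducible character is a constituent of (1_M)^G for some maximal subgroup M of π-power index, and let N be a minimal normal subgroup. Then N is a π-group. -/

import Mathlib

open scoped BigOperators Classical

/-- The character of a finite group induced from a function on a subgroup,
given by the usual induction formula. -/
noncomputable def indChar {G : Type} [Group G] (H : Subgroup G) (φ : H → ℂ) : G → ℂ :=
  fun g => (Nat.card H : ℂ)⁻¹ *
    ∑ᶠ x : G, if h : x * g * x⁻¹ ∈ H then φ (⟨x * g * x⁻¹, h⟩ : H) else 0

/-- The permutation character `(1_M)^G`. -/
noncomputable def permChar {G : Type} [Group G] (M : Subgroup G) : G → ℂ :=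
  indChar M (fun _ => 1)

/-- The usual inner product of class functions on a finite group. -/
noncomputable def charInner (G : Type) [Group G] (φ ψ : G → ℂ) : ℂ :=
  (Nat.card G : ℂ)⁻¹ * ∑ᶠ g : G, φ g * (starRingEnd ℂ) (ψ g)

/-- `χ` is an irreducible complex character of `G`. -/
def IsIrrChar (G : Type) [Group G] (χ : G → ℂ) : Prop :=
  ∃ V : FDRep ℂ G, CategoryTheory.Simple V ∧ FDRep.character V = χ

/-- `χ` is an irreducible constituent of the (virtual) character `ψ`. -/
def IsConstituent (G : Type) [Group G] (χ ψ : G → ℂ) : Prop :=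
  IsIrrChar G χ ∧ charInner G χ ψ ≠ 0

/-- A linear character of a subgroup: a multiplicative function to `ℂ` taking value `1` at `1`. -/
def IsLinearChar {G : Type} [Group G] (H : Subgroup G) (φ : H → ℂ) : Prop :=
  φ 1 = 1 ∧ ∀ a b : H, φ (a * b) = φ a * φ b

/-- A character is monomial if it is induced from a linear character of a subgroup. -/
def IsMonomial (G : Type) [Group G] (χ : G → ℂ) : Prop :=
  ∃ (H : Subgroup G) (φ : H → ℂ), IsLinearChar H φ ∧ χ = indChar H φ

/-- The kernel of a character, as a set. -/
def charKer (G : Type) [Group G] (χ : G → ℂ) : Set G := {g | χ g = χ 1}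

/-- `n` is a `π`-number: all its prime divisors lie in `π`. -/
def IsPiNumber (π : Set ℕ) (n : ℕ) : Prop := ∀ p : ℕ, p.Prime → p ∣ n → p ∈ π

/-- The largest normal `π'`-subgroup `O_{π'}(G)` (as the join of all normal `π'`-subgroups). -/
def Opi' (π : Set ℕ) (G : Type) [Group G] : Subgroup G :=
  ⨆ N ∈ {N : Subgroup G | N.Normal ∧ IsPiNumber πᶜ (Nat.card N)}, N

/-- `G` is `π`-separable: it has a normal series whose factors are `π`-groups or `π'`-groups. -/
def IsPiSeparable (π : Set ℕ) (G : Type) [Group G] : Prop :=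
  ∃ (n : ℕ) (H : Fin (n + 1) → Subgroup G),
    H 0 = ⊥ ∧ H (Fin.last n) = ⊤ ∧
    ∀ i : Fin n, H i.castSucc ≤ H i.succ ∧
      ((H i.castSucc).subgroupOf (H i.succ)).Normal ∧
      (IsPiNumber π (Nat.card (H i.succ ⧸ (H i.castSucc).subgroupOf (H i.succ))) ∨
       IsPiNumber πᶜ (Nat.card (H i.succ ⧸ (H i.castSucc).subgroupOf (H i.succ))))

/-- `G` is `π`-solvable: it has a normal series whose factors are `π'`-groups or solvable. -/
def IsPiSolvable (π : Set ℕ) (G : Type) [Group G] : Prop :=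
  ∃ (n : ℕ) (H : Fin (n + 1) → Subgroup G),
    H 0 = ⊥ ∧ H (Fin.last n) = ⊤ ∧
    ∀ i : Fin n, H i.castSucc ≤ H i.succ ∧
      ∃ hn : ((H i.castSucc).subgroupOf (H i.succ)).Normal,
      (IsPiNumber πᶜ (Nat.card (H i.succ ⧸ (H i.castSucc).subgroupOf (H i.succ))) ∨
       (letI := hn; IsSolvable (H i.succ ⧸ (H i.castSucc).subgroupOf (H i.succ))))

/-- The inertia subgroup `I_G(λ)` of a character of a normal subgroup. -/
def inertia {G : Type} [Group G] (N : Subgroup G) (hN : N.Normal) (lam : N → ℂ) :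
    Subgroup G where
  carrier := {g | ∀ n : N, lam ⟨g * n * g⁻¹, hN.conj_mem n n.2 g⟩ = lam n}
  one_mem' := by intro n; simp
  mul_mem' := by
    intro a b ha hb n
    have h1 := ha ⟨b * (n : G) * b⁻¹, hN.conj_mem n n.2 b⟩
    have h2 := hb n
    have e : (a * b) * (n : G) * (a * b)⁻¹ = a * (b * (n : G) * b⁻¹) * a⁻¹ := by group
    calc lam ⟨(a * b) * (n : G) * (a * b)⁻¹, hN.conj_mem n n.2 (a * b)⟩
        = lam ⟨a * (b * (n : G) * b⁻¹) * a⁻¹, by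
            rw [← e]; exact hN.conj_mem n n.2 (a * b)⟩ := by
          congr 1; exact Subtype.ext e
      _ = lam n := by rw [h1]; exact h2
  inv_mem' := by
    intro a ha n
    have h1 := ha ⟨a⁻¹ * (n : G) * a, by simpa using hN.conj_mem n n.2 a⁻¹⟩
    have e : a * (a⁻¹ * (n : G) * a) * a⁻¹ = (n : G) := by group
    have : lam ⟨(n : G), by rw [← e]; exact hN.conj_mem _ (by simpa using hN.conj_mem n n.2 a⁻¹) a⟩
        = lam ⟨a⁻¹ * (n : G) * a, by simpa using hN.conj_mem n n.2 a⁻¹⟩ := by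
      rw [← h1]; congr 1; exact Subtype.ext e.symm
    simpa using this.symm

/-- Conjugate of a character of a normal subgroup by a group element. -/
def conjChar {G : Type} [Group G] {N : Subgroup G} (hN : N.Normal) (g : G) (lam : N → ℂ) :
    N → ℂ :=
  fun n => lam ⟨g * (n : G) * g⁻¹, hN.conj_mem n n.2 g⟩

/-!
Let `H_k` be the first term of the `π`-separable series meeting the minimal normal subgroup `N`
nontrivially. Then `N ∩ H_k` is subnormal and embeds into a `π`- or `π'`-factor of the series, so
it is a `σ`-group for `σ = π` or `π'`. A subnormal `σ`-subgroup lies in the `σ`-radical `O_σ(G)`,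
hence `N ≤ O_σ(G)` by minimality, and `N` is a `σ`-group.

If `N` were a `π'`-group, it would lie in every maximal subgroup `M` of `π`-power index, as
otherwise `MN = G` and `|G : M|` divides `|N|`. By Frobenius reciprocity `⟨χ, (1_M)^G⟩` is the
dimension of the `M`-fixed vectors of a representation `V` affording `χ`, so the hypothesis makes
the `N`-fixed vectors, a subrepresentation of the irreducible `V`, nonzero, hence all of `V`. Thus
`N` acts trivially on every irreducible representation, hence, by Maschke's theorem, on the
regular one, and `N = 1`.
-/

namespace IsPiNumber

variable {π : Set ℕ} {m n : ℕ}

theorem of_dvd (hn : IsPiNumber π n) (hmn : m ∣ n) : IsPiNumber π m :=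
  fun p hp hpm => hn p hp (hpm.trans hmn)

theorem mul (hm : IsPiNumber π m) (hn : IsPiNumber π n) : IsPiNumber π (m * n) :=
  fun p hp hpmn => (hp.dvd_mul.mp hpmn).elim (hm p hp) (hn p hp)

theorem one : IsPiNumber π 1 :=
  fun _ hp hp1 => absurd (Nat.le_of_dvd one_pos hp1) hp.one_lt.not_ge

theorem eq_one_of_compl (h : IsPiNumber π n) (h' : IsPiNumber πᶜ n) : n = 1 := by
  by_contra hn
  obtain ⟨p, hp, hpn⟩ := Nat.exists_prime_and_dvd hn
  exact h' p hp hpn (h p hp hpn)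

end IsPiNumber

namespace Subgroup

variable {G : Type} [Group G]

theorem card_sup_dvd_of_le_normalizer {A B : Subgroup G} (h : A ≤ normalizer B) :
    Nat.card ↥(A ⊔ B) ∣ Nat.card A * Nat.card B := by
  have := normal_subgroupOf_of_le_normalizer h
  have := normal_subgroupOf_sup_of_le_normalizer h
  have hquot : B.relIndex (A ⊔ B) = (B.subgroupOf A).index :=
    (Nat.card_congr (QuotientGroup.quotientInfEquivProdNormalizerQuotient A B h).toEquiv).symm
  calc Nat.card ↥(A ⊔ B) = Nat.card B * B.relIndex (A ⊔ B) := by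
        rw [← relIndex_bot_left, ← relIndex_bot_left,
          relIndex_mul_relIndex ⊥ B (A ⊔ B) bot_le le_sup_right]
    _ ∣ Nat.card B * Nat.card A := by rw [hquot]; exact mul_dvd_mul_left _ (index_dvd_card _)
    _ = Nat.card A * Nat.card B := mul_comm _ _

theorem card_dvd_card_quotient_of_inf_eq_bot {A K L : Subgroup G} (hAK : A ≤ K)
    [(L.subgroupOf K).Normal] (h : A ⊓ L = ⊥) : Nat.card A ∣ Nat.card (K ⧸ L.subgroupOf K) := by
  refine card_dvd_of_injective ((QuotientGroup.mk' _).comp (inclusion hAK)) ?_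
  refine (injective_iff_map_eq_one _).mpr fun a ha => ?_
  rw [MonoidHom.comp_apply, QuotientGroup.mk'_apply, QuotientGroup.eq_one_iff] at ha
  have : (a : G) ∈ A ⊓ L := ⟨a.2, ha⟩
  rw [h, mem_bot] at this
  exact Subtype.ext this

theorem index_dvd_card_of_sup_eq_top [Finite G] {M N : Subgroup G} [N.Normal] (h : M ⊔ N = ⊤) :
    M.index ∣ Nat.card N := by
  have htower := relIndex_mul_relIndex (M ⊓ N) M (M ⊔ N) inf_le_left le_sup_left
  rw [← relIndex_mul_relIndex (M ⊓ N) N (M ⊔ N) inf_le_right le_sup_right, inf_relIndex_left,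
    inf_relIndex_right, ← relIndex_sup_right M N, mul_comm] at htower
  have hM : M.index = M.relIndex N := by
    rw [← relIndex_top_right, ← h]
    exact Nat.eq_of_mul_eq_mul_right (Nat.pos_of_ne_zero index_ne_zero_of_finite) htower
  rw [hM]
  exact relIndex_dvd_card M N

end Subgroup

section PiRadical

open Subgroup

variable {G : Type} [Group G] {π : Set ℕ}

def normalPiSubgroups (π : Set ℕ) (K : Subgroup G) : Set (Subgroup G) :=
  {A | A ≤ K ∧ K ≤ normalizer A ∧ IsPiNumber π (Nat.card A)}

/-- The `π`-radical `O_π(K)`: for finite `G`, the largest normal `π`-subgroup of `K`. -/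
noncomputable def piRadical (π : Set ℕ) (K : Subgroup G) : Subgroup G :=
  sSup (normalPiSubgroups π K)

theorem le_piRadical {K A : Subgroup G} (hA : A ∈ normalPiSubgroups π K) : A ≤ piRadical π K :=
  le_sSup hA

theorem supClosed_normalPiSubgroups (K : Subgroup G) : SupClosed (normalPiSubgroups π K) := by
  rintro A ⟨hAK, hKA, hA⟩ B ⟨hBK, hKB, hB⟩
  exact ⟨sup_le hAK hBK, (le_inf hKA hKB).trans (normalizer_inf_normalizer_le_normalizer_sup A B),
    (hA.mul hB).of_dvd (card_sup_dvd_of_le_normalizer (hAK.trans hKB))⟩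

theorem piRadical_mem_normalPiSubgroups [Finite G] (K : Subgroup G) :
    piRadical π K ∈ normalPiSubgroups π K :=
  (supClosed_normalPiSubgroups K).sSup_mem (Set.toFinite _)
    ⟨bot_le, le_normalizer_of_normal, by simpa using IsPiNumber.one⟩ subset_rfl

theorem map_conj_mem_normalPiSubgroups {K A : Subgroup G} {g : G} (hg : g ∈ normalizer K)
    (hA : A ∈ normalPiSubgroups π K) :
    A.map (MulAut.conj g).toMonoidHom ∈ normalPiSubgroups π K := by
  rw [mem_normalizer_iff_map_conj_eq] at hg
  obtain ⟨hAK, hKA, hAπ⟩ := hA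
  refine ⟨hg ▸ map_mono hAK, ?_, ?_⟩
  · rw [← hg, ← map_equiv_normalizer_eq]
    exact map_mono hKA
  · rwa [card_map_of_injective (MulAut.conj g).injective]

theorem normalizer_le_normalizer_piRadical [Finite G] (K : Subgroup G) :
    normalizer K ≤ normalizer (piRadical π K : Set G) := by
  intro g hg
  refine mem_normalizer_fintype fun x hx => ?_
  have hmap : (piRadical π K).map (MulAut.conj g).toMonoidHom ≤ piRadical π K := by
    rw [piRadical, (gc_map_comap _).l_sSup]
    exact iSup₂_le fun A hA => le_piRadical (map_conj_mem_normalPiSubgroups hg hA)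
  exact hmap ⟨x, hx, rfl⟩

theorem piRadical_le_piRadical [Finite G] {H K : Subgroup G} (hHK : H ≤ K)
    (hKH : K ≤ normalizer H) : piRadical π H ≤ piRadical π K := by
  obtain ⟨hle, -, hπ⟩ := piRadical_mem_normalPiSubgroups (π := π) H
  exact le_piRadical ⟨hle.trans hHK, hKH.trans (normalizer_le_normalizer_piRadical H), hπ⟩

theorem Subgroup.IsSubnormal.piRadical_le [Finite G] {H : Subgroup G} (hH : H.IsSubnormal) :
    piRadical π H ≤ piRadical π ⊤ := by
  induction hH with
  | top => exact le_rfl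
  | step H K hHK _ hHK' ih =>
    exact (piRadical_le_piRadical hHK ((normal_subgroupOf_iff_le_normalizer hHK).mp hHK')).trans ih

theorem normal_piRadical_top [Finite G] : (piRadical π (⊤ : Subgroup G)).Normal :=
  normalizer_eq_top_iff.mp (top_le_iff.mp (piRadical_mem_normalPiSubgroups ⊤).2.1)

end PiRadical

section Separable

open Subgroup

variable {G : Type} [Group G]

theorem isPiNumber_card_of_isSubnormal_le [Finite G] {σ : Set ℕ} {A N : Subgroup G}
    (hA : A.IsSubnormal) (hAN : A ≤ N) (hA1 : A ≠ ⊥) (hAσ : IsPiNumber σ (Nat.card A))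
    (hN : N.Normal) (hmin : ∀ N' : Subgroup G, N'.Normal → N' ≤ N → N' = ⊥ ∨ N' = N) :
    IsPiNumber σ (Nat.card N) := by
  have hAP : A ≤ piRadical σ ⊤ :=
    (le_piRadical ⟨le_rfl, le_normalizer, hAσ⟩).trans hA.piRadical_le
  have hNP : N ⊓ piRadical σ ⊤ = N :=
    (hmin _ (normal_inf_normal N _ (hH := hN) (hK := normal_piRadical_top))
      inf_le_left).resolve_left (ne_bot_of_le_ne_bot hA1 (le_inf hAN hAP))
  exact (piRadical_mem_normalPiSubgroups ⊤).2.2.of_dvd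
    (card_dvd_of_le (inf_eq_left.mp hNP))

theorem isSubnormal_of_series {n : ℕ} {H : Fin (n + 1) → Subgroup G} (hlast : H (Fin.last n) = ⊤)
    (hstep : ∀ i : Fin n, H i.castSucc ≤ H i.succ ∧ ((H i.castSucc).subgroupOf (H i.succ)).Normal)
    (i : Fin (n + 1)) : (H i).IsSubnormal :=
  Fin.reverseInduction (hlast ▸ IsSubnormal.top)
    (fun j hj => IsSubnormal.step _ _ (hstep j).1 hj (hstep j).2) i

theorem IsPiSeparable.isPiNumber_or_isPiNumber_compl [Finite G] {π : Set ℕ}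
    (hsep : IsPiSeparable π G) {N : Subgroup G} (hN : N.Normal) (hNne : N ≠ ⊥)
    (hmin : ∀ N' : Subgroup G, N'.Normal → N' ≤ N → N' = ⊥ ∨ N' = N) :
    IsPiNumber π (Nat.card N) ∨ IsPiNumber πᶜ (Nat.card N) := by
  obtain ⟨n, H, h0, hlast, hstep⟩ := hsep
  obtain ⟨k, hk, hk'⟩ : ∃ k : Fin n, N ⊓ H k.castSucc = ⊥ ∧ N ⊓ H k.succ ≠ ⊥ := by
    by_contra! h
    exact hNne (by simpa [hlast] using
      Fin.induction (motive := fun i => N ⊓ H i = ⊥) (by simp [h0]) h (Fin.last n))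
  obtain ⟨hle, hnormal, hfactor⟩ := hstep k
  have hA : (N ⊓ H k.succ).IsSubnormal :=
    hN.isSubnormal.inf (isSubnormal_of_series hlast (fun i => ⟨(hstep i).1, (hstep i).2.1⟩) _)
  have hdvd : Nat.card ↥(N ⊓ H k.succ) ∣
      Nat.card (H k.succ ⧸ (H k.castSucc).subgroupOf (H k.succ)) :=
    card_dvd_card_quotient_of_inf_eq_bot inf_le_right (by rw [inf_assoc, inf_eq_right.mpr hle, hk])
  have hσ (σ : Set ℕ)
      (h : IsPiNumber σ (Nat.card (H k.succ ⧸ (H k.castSucc).subgroupOf (H k.succ)))) :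
      IsPiNumber σ (Nat.card N) :=
    isPiNumber_card_of_isSubnormal_le hA inf_le_left hk' (h.of_dvd hdvd) hN hmin
  exact hfactor.imp (hσ π) (hσ πᶜ)

end Separable

section Characters

variable {G : Type} [Group G] [Fintype G]

theorem conj_permChar (M : Subgroup G) (g : G) : (starRingEnd ℂ) (permChar M g) = permChar M g := by
  simp [permChar, indChar, finsum_eq_sum_of_fintype]

theorem sum_ite_conj_mem {χ : G → ℂ} (hχ : ∀ g h, χ (h * g * h⁻¹) = χ g) (M : Subgroup G) (x : G) :
    ∑ g : G, (if x * g * x⁻¹ ∈ M then χ g else 0) = ∑ m : M, χ m := calc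
  _ = ∑ g : G, if g ∈ M then χ g else 0 :=
    Fintype.sum_equiv (MulAut.conj x).toEquiv _ _ fun g => by simp [hχ]
  _ = ∑ g ∈ Finset.univ.filter (· ∈ M), χ g := (Finset.sum_filter _ _).symm
  _ = ∑ m : M, χ m := Finset.sum_subtype _ (by simp) _

theorem charInner_permChar {χ : G → ℂ} (hχ : ∀ g h, χ (h * g * h⁻¹) = χ g) (M : Subgroup G) :
    charInner G χ (permChar M) = (Nat.card M : ℂ)⁻¹ * ∑ m : M, χ m := by
  have hG : (Nat.card G : ℂ) ≠ 0 := Nat.cast_ne_zero.mpr Nat.card_pos.ne'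
  calc charInner G χ (permChar M)
      = (Nat.card G : ℂ)⁻¹ * ((Nat.card M : ℂ)⁻¹ *
          ∑ x : G, ∑ g : G, if x * g * x⁻¹ ∈ M then χ g else 0) := by
        simp only [charInner, conj_permChar, finsum_eq_sum_of_fintype]
        simp only [permChar, indChar, finsum_eq_sum_of_fintype, Finset.mul_sum, dite_eq_ite,
          mul_ite, mul_one, mul_zero]
        rw [Finset.sum_comm]
        simp only [mul_comm (χ _)]
    _ = (Nat.card M : ℂ)⁻¹ * ∑ m : M, χ m := by
        simp only [sum_ite_conj_mem hχ, Finset.sum_const, Finset.card_univ, nsmul_eq_mul,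
          Fintype.card_eq_nat_card]
        field_simp

end Characters

open CategoryTheory

namespace Representation

variable {k G V : Type*} [CommRing k] [Group G] [AddCommGroup V] [Module k V]
  (ρ : Representation k G V) (N : Subgroup G) [N.Normal]

noncomputable def invariantsSubrepresentation : Subrepresentation ρ :=
  ⟨invariants (ρ.comp N.subtype), fun g _ hv => le_comap_invariants ρ N g hv⟩

theorem le_ker_iff_invariantsSubrepresentation_eq_top :
    N ≤ ρ.ker ↔ invariantsSubrepresentation ρ N = ⊤ := by
  refine ⟨fun h => Subrepresentation.ext (eq_top_iff.mpr fun v _ ⟨n, hn⟩ => ?_), fun h n hn => ?_⟩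
  · rw [MonoidHom.comp_apply, Subgroup.coe_subtype, (h hn : ρ n = 1), Module.End.one_apply]
  · ext v
    exact (h ▸ Submodule.mem_top : v ∈ (invariantsSubrepresentation ρ N).toSubmodule) ⟨n, hn⟩

end Representation

namespace Subrepresentation

variable {k G V : Type*} [Field k] [Monoid G] [AddCommGroup V] [Module k V]
  {ρ : Representation k G V}

def map (W : Subrepresentation ρ) (S : Subrepresentation W.toRepresentation) :
    Subrepresentation ρ where
  toSubmodule := S.toSubmodule.map W.toSubmodule.subtype
  apply_mem_toSubmodule g := by
    rintro _ ⟨w, hw, rfl⟩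
    exact ⟨_, S.apply_mem_toSubmodule g hw, rfl⟩

theorem isIrreducible_toRepresentation {W : Subrepresentation ρ} (hW : IsAtom W) :
    Representation.IsIrreducible W.toRepresentation where
  exists_pair_ne := by
    obtain ⟨w, hw, hw0⟩ := (Submodule.ne_bot_iff _).mp fun h => hW.1 (Subrepresentation.ext h)
    refine ⟨⊥, ⊤, fun h => hw0 ?_⟩
    have : (⟨w, hw⟩ : W.toSubmodule) ∈ (⊥ : Subrepresentation W.toRepresentation).toSubmodule :=
      h ▸ Submodule.mem_top
    exact congrArg Subtype.val ((Submodule.mem_bot k).mp this)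
  eq_bot_or_eq_top S := by
    have hSW : W.map S ≤ W := by
      rintro _ ⟨w, -, rfl⟩
      exact w.2
    refine (hW.le_iff.mp hSW).imp (fun h => ?_) (fun h => ?_)
    · refine Subrepresentation.ext (eq_bot_iff.mpr fun w hw => ?_)
      have : (w : V) ∈ (W.map S).toSubmodule := ⟨w, hw, rfl⟩
      rw [h] at this
      exact Subtype.ext ((Submodule.mem_bot k).mp this)
    · refine Subrepresentation.ext (eq_top_iff.mpr fun w _ => ?_)
      have : (w : V) ∈ (W.map S).toSubmodule := by rw [h]; exact w.2
      obtain ⟨w', hw', hww'⟩ := this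
      exact Subtype.ext hww' ▸ hw'

end Subrepresentation

universe u

namespace FDRep

section Monoid

variable {k G : Type u} [Field k] [Monoid G]

theorem mono_iff_injective {V W : FDRep k G} (f : V ⟶ W) :
    Mono f ↔ Function.Injective f.hom := by
  rw [← Functor.mono_map_iff_mono (forget₂ (FDRep k G) (Rep k G)), Rep.mono_iff_injective]
  rfl

theorem epi_iff_surjective {V W : FDRep k G} (f : V ⟶ W) :
    Epi f ↔ Function.Surjective f.hom := by
  rw [← Functor.epi_map_iff_epi (forget₂ (FDRep k G) (Rep k G)), Rep.epi_iff_surjective]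
  rfl

theorem hom_eq_zero_iff {V W : FDRep k G} (f : V ⟶ W) : f = 0 ↔ ∀ v, f.hom v = 0 := by
  refine ⟨fun h v => by subst h; rfl, fun h => ?_⟩
  ext v
  exact h v

noncomputable def subrepresentationι (V : FDRep k G) (W : Subrepresentation V.ρ) :
    FDRep.of W.toRepresentation ⟶ V where
  hom := FGModuleCat.ofHom W.toSubmodule.subtype
  comm _ := rfl

instance (V : FDRep k G) (W : Subrepresentation V.ρ) : Mono (subrepresentationι V W) :=
  (mono_iff_injective _).mpr Subtype.val_injective

noncomputable def range {V W : FDRep k G} (f : V ⟶ W) : Subrepresentation W.ρ where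
  toSubmodule := LinearMap.range f.hom.hom.hom
  apply_mem_toSubmodule g := by
    rintro _ ⟨v, rfl⟩
    exact ⟨V.ρ g v, congr($(f.comm g).hom.hom v)⟩

theorem isIrreducible_of_simple (V : FDRep k G) [Simple V] :
    Representation.IsIrreducible V.ρ where
  exists_pair_ne := ⟨⊥, ⊤, fun h => id_nonzero V <| (hom_eq_zero_iff _).mpr fun v =>
    (Submodule.mem_bot k).mp (h ▸ Submodule.mem_top : v ∈ (⊥ : Subrepresentation V.ρ).toSubmodule)⟩
  eq_bot_or_eq_top W := by
    refine or_iff_not_imp_left.mpr fun hW => ?_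
    have hι : subrepresentationι V W ≠ 0 := by
      obtain ⟨w, hw, hw0⟩ := (Submodule.ne_bot_iff _).mp fun h => hW (Subrepresentation.ext h)
      exact fun h => hw0 (((hom_eq_zero_iff _).mp h) ⟨w, hw⟩)
    have := isIso_of_mono_of_nonzero hι
    refine Subrepresentation.ext (eq_top_iff.mpr fun v _ => ?_)
    obtain ⟨w, rfl⟩ := (epi_iff_surjective _).mp (inferInstance : Epi (subrepresentationι V W)) v
    exact w.2

theorem simple_of_isIrreducible (V : FDRep k G) (h : Representation.IsIrreducible V.ρ) :
    Simple V where
  mono_isIso_iff_nonzero {Y} f _ := by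
    refine ⟨fun _ hf => bot_ne_top (α := Subrepresentation V.ρ) ?_, fun hf => ?_⟩
    · refine Subrepresentation.ext (eq_top_iff.mpr fun v _ => ?_)
      obtain ⟨y, rfl⟩ := (epi_iff_surjective f).mp inferInstance v
      exact (hom_eq_zero_iff f).mp hf y
    · have hrange : range f = ⊤ := (h.eq_bot_or_eq_top _).resolve_left fun h0 => hf <|
        (hom_eq_zero_iff f).mpr fun y => (Submodule.mem_bot k).mp
          (h0 ▸ LinearMap.mem_range_self _ y : f.hom y ∈ (⊥ : Subrepresentation V.ρ).toSubmodule)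
      have : Epi f := (epi_iff_surjective f).mpr fun v =>
        (hrange ▸ Submodule.mem_top : v ∈ (range f).toSubmodule)
      exact isIso_of_mono_of_epi f

end Monoid

section Group

variable {k G : Type u} [Field k] [Group G] [Finite G] [NeZero (Nat.card G : k)]

theorem le_ker_of_forall_simple {N : Subgroup G} [N.Normal]
    (h : ∀ V : FDRep k G, Simple V → N ≤ V.ρ.ker) (V : FDRep k G) : N ≤ V.ρ.ker := by
  have : IsAtomic (Subrepresentation V.ρ) :=
    Subrepresentation.subrepresentationSubmoduleOrderIso.isAtomic_iff.mpr inferInstance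
  rw [Representation.le_ker_iff_invariantsSubrepresentation_eq_top]
  obtain ⟨C, hC⟩ := exists_isCompl (Representation.invariantsSubrepresentation V.ρ N)
  obtain rfl | ⟨A, hA, hAC⟩ := eq_bot_or_exists_atom_le C
  · exact eq_top_of_isCompl_bot hC
  · have hirr := Subrepresentation.isIrreducible_toRepresentation hA
    rw [← FDRep.of_ρ' A.toRepresentation] at hirr
    have hAN := h _ (simple_of_isIrreducible _ hirr)
    have hAF : A ≤ Representation.invariantsSubrepresentation V.ρ N := fun a ha ⟨n, hn⟩ =>
      congr(($(hAN hn) ⟨a, ha⟩ : V))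
    exact (hA.1 (le_bot_iff.mp (hC.disjoint hAF hAC))).elim

theorem eq_bot_of_forall_simple_le_ker {N : Subgroup G} [N.Normal]
    (h : ∀ V : FDRep k G, Simple V → N ≤ V.ρ.ker) : N = ⊥ := by
  have := Fintype.ofFinite G
  refine (Subgroup.eq_bot_iff_forall N).mpr fun n hn => ?_
  have hρ : Representation.ofMulAction k G G n = 1 :=
    le_ker_of_forall_simple h (FDRep.of (Representation.ofMulAction k G G)) hn
  have hsingle := LinearMap.congr_fun hρ (MonoidAlgebra.single (1 : G) (1 : k))
  rw [Representation.ofMulAction_single, Module.End.one_apply, smul_eq_mul, mul_one] at hsingle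
  exact MonoidAlgebra.single_left_injective one_ne_zero hsingle

end Group

end FDRep

theorem FDRep.le_ker_of_charInner_permChar_ne_zero {G : Type} [Group G] [Finite G]
    (V : FDRep ℂ G) [Simple V] {M N : Subgroup G} [N.Normal] (hNM : N ≤ M)
    (h : charInner G V.character (permChar M) ≠ 0) : N ≤ V.ρ.ker := by
  have := Fintype.ofFinite G
  have := invertibleOfNonzero (Nat.cast_ne_zero.mpr Nat.card_pos.ne' : (Nat.card M : ℂ) ≠ 0)
  have hM : Representation.invariants (V.ρ.comp M.subtype) ≠ ⊥ := fun h0 => h <| by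
    rw [charInner_permChar (FDRep.char_conj V)]
    exact (Representation.card_inv_mul_sum_char_eq_finrank (V.ρ.comp M.subtype)).trans
      (by rw [h0, finrank_bot, Nat.cast_zero])
  rw [Representation.le_ker_iff_invariantsSubrepresentation_eq_top]
  refine ((FDRep.isIrreducible_of_simple V).eq_bot_or_eq_top _).resolve_left fun hN => hM ?_
  refine eq_bot_iff.mpr fun v hv => ?_
  have : v ∈ (Representation.invariantsSubrepresentation V.ρ N).toSubmodule :=
    fun n => hv ⟨n, hNM n.2⟩
  rwa [hN] at this

theorem Subgroup.le_of_isCoatom_of_isPiNumber {G : Type} [Group G] [Finite G] {π : Set ℕ}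
    {M N : Subgroup G} [N.Normal] (hM : IsCoatom M) (hMπ : IsPiNumber π M.index)
    (hNπ : IsPiNumber πᶜ (Nat.card N)) : N ≤ M := by
  by_contra hNM
  have hsup : M ⊔ N = ⊤ := hM.2 _ (left_lt_sup.mpr hNM)
  exact hM.1 (index_eq_one.mp
    (hMπ.eq_one_of_compl (hNπ.of_dvd (index_dvd_card_of_sup_eq_top hsup))))

/-- If `G` is a finite `π`-separable group in which every irreducible character is a
constituent of `(1_M)^G` for some maximal subgroup `M` of `π`-number index, then every
minimal normal subgroup `N` of `G` is a `π`-group. -/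
theorem stmt19 {G : Type} [Group G] [Finite G] (π : Set ℕ) (hsep : IsPiSeparable π G)
    (h : ∀ χ : G → ℂ, IsIrrChar G χ → ∃ M : Subgroup G, IsCoatom M ∧
      IsPiNumber π M.index ∧ charInner G χ (permChar M) ≠ 0)
    (N : Subgroup G) (hN : N.Normal) (hNne : N ≠ ⊥)
    (hmin : ∀ N' : Subgroup G, N'.Normal → N' ≤ N → N' = ⊥ ∨ N' = N) :
    IsPiNumber π (Nat.card N) := by
  refine (hsep.isPiNumber_or_isPiNumber_compl hN hNne hmin).resolve_right fun hπ' => hNne ?_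
  refine FDRep.eq_bot_of_forall_simple_le_ker (k := ℂ) fun V hV => ?_
  obtain ⟨M, hM, hMπ, hMV⟩ := h V.character ⟨V, hV, rfl⟩
  exact V.le_ker_of_charInner_permChar_ne_zero
    (Subgroup.le_of_isCoatom_of_isPiNumber hM hMπ hπ') hMV
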